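/- arXiv:2506.16021 — 3 statements merged into one kernel-verified Lean document; each statement's English description precedes it below -/
import Mathlib

section
/- For every integer k ≥ 2 and every finite sequence of n ≥ 1 distinct points in the plane in general position, the ordered Θ_k-graph G = (V, E) built on this sequence is a connected graph. -/
/-!
Ordered Θ_k-graphs: common definitions.

Points live in the plane, modelled as `ℂ`.  For a point `u`, the plane is
partitioned into `k` cones of aperture `θ = 2π/k`; cone `j` has as bisector the
ray from `u` in direction `exp((π/2 - j·θ)·I)` (cone `0` points upwards, cones
are numbered clockwise).  A point `w ≠ u` lies (in the interior of) cone `j` of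
`u` iff the angle between `w - u` and the bisector is `< θ/2`.  `projDist`
measures the length of the orthogonal projection of `w - u` onto the bisector
of cone `j`.  Insertion orders: vertex `i : Fin n` is the `(i+1)`-st inserted
vertex, so `ρ(v) < ρ(u)` is `v < u`.
-/

namespace OrderedTheta

noncomputable def theta (k : ℕ) : ℝ := 2 * Real.pi / k

/-- Unit vector along the bisector of the `j`-th cone. -/
noncomputable def dir (k j : ℕ) : ℂ :=
  Complex.exp ((Real.pi / 2 - j * theta k) * Complex.I)

/-- `w` lies in the (open) cone number `j` of apex `u`. -/
def inCone (k : ℕ) (u w : ℂ) (j : ℕ) : Prop :=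
  w ≠ u ∧ |Complex.arg ((w - u) / dir k j)| < theta k / 2

/-- The distance `|u w'|` from `u` to the orthogonal projection `w'` of `w`
onto the bisector of cone `j` of `u` (for `w` in the open cone `j` this equals
the signed component of `w - u` along the bisector direction). -/
noncomputable def projDist (k : ℕ) (u w : ℂ) (j : ℕ) : ℝ :=
  ((w - u) * (starRingEnd ℂ) (dir k j)).re

/-- A sequence of `n` distinct points in the plane, in general position, to be
inserted in the order of their indices; `V i` is the `(i+1)`-st inserted point. -/
structure Config (k n : ℕ) : Type where
  two_le_k : 2 ≤ k
  V : Fin n → ℂ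
  inj : Function.Injective V
  /-- no previously inserted point lies on a boundary ray of a cone of `V i`:
  every earlier point lies in the open cone of some index `c < k`. -/
  gp_cone : ∀ i j : Fin n, j < i → ∃ c < k, inCone k (V i) (V j) c
  /-- two distinct earlier points lying in a common cone of `V i` have distinct
  bisector-projection distances from `V i`. -/
  gp_dist : ∀ i j l : Fin n, j < i → l < i → j ≠ l →
    ∀ c < k, inCone k (V i) (V j) c → inCone k (V i) (V l) c →
      projDist k (V i) (V j) c ≠ projDist k (V i) (V l) c

/-- The edge created upon insertion of `i`, towards the earlier point `j`:
`j` is inserted before `i`, and among all earlier points in the cone of `i`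
containing `j`, `j` is closest (measured along the bisector). -/
def EdgeDir {k n : ℕ} (C : Config k n) (i j : Fin n) : Prop :=
  j < i ∧ ∃ c < k, inCone k (C.V i) (C.V j) c ∧
    ∀ l : Fin n, l < i → inCone k (C.V i) (C.V l) c →
      projDist k (C.V i) (C.V j) c ≤ projDist k (C.V i) (C.V l) c

/-- The ordered Θ_k-graph of a configuration, as an undirected simple graph on
`Fin n`. -/
def graph {k n : ℕ} (C : Config k n) : SimpleGraph (Fin n) where
  Adj i j := EdgeDir C i j ∨ EdgeDir C j i
  symm := ⟨fun _ _ hij => hij.symm⟩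
  loopless := ⟨by
    intro i h
    rcases h with h | h <;> exact absurd h.1 (lt_irrefl i)⟩

/-- `x` lies in the canonical triangle `Δ u w`: `x` lies in the cone of `u`
containing `w` and its projection onto the bisector is at distance at most
`|u w'|` from `u`. -/
def inCanonical (k : ℕ) (u w x : ℂ) : Prop :=
  ∃ c < k, inCone k u w c ∧ inCone k u x c ∧ projDist k u x c ≤ projDist k u w c

/-- `v` is the target of an ordered Θ-routing step from `u` towards the first
inserted vertex `v₁`: it is `v₁` itself if `{u, v₁}` is an edge, and otherwise
the neighbour of `u` of smaller insertion order lying in the canonical triangle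
`Δ u v₁` whose bisector projection is closest to `u`. -/
def IsRoutingStep {k n : ℕ} (C : Config k n) (hn : 0 < n) (u v : Fin n) : Prop :=
  ((graph C).Adj u ⟨0, hn⟩ ∧ v = ⟨0, hn⟩) ∨
  (¬ (graph C).Adj u ⟨0, hn⟩ ∧ (graph C).Adj u v ∧ v < u ∧
    inCanonical k (C.V u) (C.V ⟨0, hn⟩) (C.V v) ∧
    ∀ w : Fin n, (graph C).Adj u w → w < u →
      inCanonical k (C.V u) (C.V ⟨0, hn⟩) (C.V w) →
      ∀ c < k, inCone k (C.V u) (C.V v) c → inCone k (C.V u) (C.V w) c →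
        projDist k (C.V u) (C.V v) c ≤ projDist k (C.V u) (C.V w) c)

/-- `u'` is an exploration candidate neighbour of `u` (with respect to the
destination `t`): `u'` is a neighbour of `u` with `ρ(u) < ρ(u') ≤ ρ(t)` such
that `u` lies in the interior of the cone of `u'` containing `v₁`. -/
def ExplCand {k n : ℕ} (C : Config k n) (hn : 0 < n) (t u u' : Fin n) : Prop :=
  (graph C).Adj u u' ∧ u < u' ∧ u' ≤ t ∧
  ∃ c < k, inCone k (C.V u') (C.V ⟨0, hn⟩) c ∧ inCone k (C.V u') (C.V u) c

/-- The exploration space `S(v₁)`: the smallest set of vertices containing `v₁`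
and closed under taking exploration candidate neighbours. -/
inductive InExplSpace {k n : ℕ} (C : Config k n) (hn : 0 < n) (t : Fin n) : Fin n → Prop
  | base : InExplSpace C hn t ⟨0, hn⟩
  | step {u u' : Fin n} :
      InExplSpace C hn t u → ExplCand C hn t u u' → InExplSpace C hn t u'

/-- The label of a vertex: its coordinates together with its insertion order. -/
noncomputable def label {k n : ℕ} (C : Config k n) (v : Fin n) : ℂ × ℕ :=
  (C.V v, (v : ℕ) + 1)

/-- The vertices at graph distance at most `h` from `u`. -/
def ball {k n : ℕ} (C : Config k n) (u : Fin n) (h : ℕ) : Set (Fin n) :=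
  {v | ∃ p : (graph C).Walk u v, p.length ≤ h}

/-- The data visible to an `h`-local algorithm: a labelled vertex set together
with a labelled edge set. -/
abbrev LocalView : Type := Set (ℂ × ℕ) × Set ((ℂ × ℕ) × (ℂ × ℕ))

/-- The `h`-neighbourhood `B_h(u)`: the induced labelled subgraph on all
vertices at graph distance at most `h` from `u`. -/
noncomputable def view {k n : ℕ} (C : Config k n) (u : Fin n) (h : ℕ) : LocalView :=
  (label C '' ball C u h,
   {e | ∃ a ∈ ball C u h, ∃ b ∈ ball C u h,
      (graph C).Adj a b ∧ e = (label C a, label C b)})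

/-- One step of the descending algorithm `A^down`: move to the neighbour of
minimum insertion order among the neighbours of smaller insertion order. -/
def AdownStep {k n : ℕ} (C : Config k n) (u v : Fin n) : Prop :=
  (graph C).Adj u v ∧ v < u ∧ ∀ v' : Fin n, (graph C).Adj u v' → v' < u → v ≤ v'

/-- The angle of the vector `v - u`, measured counterclockwise from the
positive horizontal direction, normalised to `[0, 2π)`. -/
noncomputable def alpha (u v : ℂ) : ℝ :=
  if 0 ≤ Complex.arg (v - u) then Complex.arg (v - u)
  else Complex.arg (v - u) + 2 * Real.pi

/-- One step of the algorithm `A^up(v₁, t)` on states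
`(current vertex, previous vertex, exploration bit)`. -/
def AupStep {k n : ℕ} (C : Config k n) (hn : 0 < n) (t : Fin n)
    (s s' : Fin n × Option (Fin n) × Bool) : Prop :=
  s.1 ≠ t ∧
  ((s.2.2 = true ∧
     ((∃ v : Fin n, ExplCand C hn t s.1 v ∧
         (∀ v' : Fin n, ExplCand C hn t s.1 v' →
           alpha (C.V s.1) (C.V v) ≤ alpha (C.V s.1) (C.V v')) ∧
         s' = (v, some s.1, true)) ∨
      ((¬ ∃ v : Fin n, ExplCand C hn t s.1 v) ∧
        ∃ u' : Fin n, IsRoutingStep C hn s.1 u' ∧ s' = (u', some s.1, false)))) ∨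
   (s.2.2 = false ∧ ∃ p : Fin n, s.2.1 = some p ∧
     ((∃ v : Fin n,
         (ExplCand C hn t s.1 v ∧ alpha (C.V s.1) (C.V p) < alpha (C.V s.1) (C.V v)) ∧
         (∀ v' : Fin n, ExplCand C hn t s.1 v' →
           alpha (C.V s.1) (C.V p) < alpha (C.V s.1) (C.V v') →
           alpha (C.V s.1) (C.V v) ≤ alpha (C.V s.1) (C.V v')) ∧
         s' = (v, some s.1, true)) ∨
      ((¬ ∃ v : Fin n, ExplCand C hn t s.1 v ∧
          alpha (C.V s.1) (C.V p) < alpha (C.V s.1) (C.V v)) ∧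
        ∃ u' : Fin n, IsRoutingStep C hn s.1 u' ∧ s' = (u', some s.1, false)))))

/-- The point sequence defining `L_h^k` (0-based index `j` is the `(j+1)`-st
inserted point `v_{j+1}`). -/
noncomputable def Lpt (h k : ℕ) (ε : ℝ) (j : ℕ) : ℂ :=
  if j = 0 then 0
  else if j = 2 * h + 1 then
    ((-2 : ℝ) : ℂ) + ((-(2 * (h : ℝ)) * ε : ℝ) : ℂ) * Complex.I
  else if j = 2 * h + 2 then
    ((-2 / Real.tan (theta k / 2) - 3 * (h : ℝ) * ε : ℝ) : ℂ) * Complex.I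
  else if j % 2 = 1 then
    (((((j + 1) / 2 : ℕ) : ℝ) / (h : ℝ) : ℝ) + ((-(((j + 1) / 2 : ℕ) : ℝ) * ε : ℝ) : ℂ) * Complex.I)
  else
    ((-(((j / 2 : ℕ) : ℝ) / (h : ℝ)) : ℝ) + ((-(((j / 2 : ℕ) : ℝ)) * ε : ℝ) : ℂ) * Complex.I)

/-- The point sequence defining `R_h^k`: identical to the one for `L_h^k`
except that `v_{2h+2}` is placed at `(2, -2hε)` instead of `(-2, -2hε)`. -/
noncomputable def Rpt (h k : ℕ) (ε : ℝ) (j : ℕ) : ℂ :=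
  if j = 2 * h + 1 then ((2 : ℝ) : ℂ) + ((-(2 * (h : ℝ)) * ε : ℝ) : ℂ) * Complex.I
  else Lpt h k ε j

/-!
The first vertex `v₁` lies in an open cone of every later vertex `u`, so that cone contains
earlier points, and the one among them with the smallest bisector projection is joined to `u`.
Following such edges strictly decreases the insertion order, hence every vertex reaches `v₁`.
-/

section

variable {k n : ℕ} (C : Config k n)

lemma exists_edgeDir_of_lt {i j : Fin n} (hji : j < i) : ∃ l, EdgeDir C i l := by
  obtain ⟨c, hck, hjc⟩ := C.gp_cone i j hji
  obtain ⟨l, ⟨hli, hlc⟩, hmin⟩ :=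
    Set.exists_min_image {m : Fin n | m < i ∧ inCone k (C.V i) (C.V m) c}
      (fun m => projDist k (C.V i) (C.V m) c) (Set.toFinite _) ⟨j, hji, hjc⟩
  exact ⟨l, hli, c, hck, hlc, fun m hmi hmc => hmin m ⟨hmi, hmc⟩⟩

lemma graph_reachable_first (hn : 0 < n) (i : Fin n) : (graph C).Reachable i ⟨0, hn⟩ := by
  induction i using WellFoundedLT.induction with
  | ind i ih =>
    rcases Nat.eq_zero_or_pos i with hi | hi
    · rw [show i = ⟨0, hn⟩ from Fin.ext hi]
    · obtain ⟨l, hl⟩ := exists_edgeDir_of_lt C (j := ⟨0, hn⟩) hi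
      exact (SimpleGraph.Adj.reachable (Or.inl hl)).trans (ih l hl.1)

end

/-- For every integer `k ≥ 2` and every finite sequence of
`n ≥ 1` distinct points in the plane in general position, the ordered
Θ_k-graph built on this sequence is connected. -/
theorem orderedTheta_connected {k n : ℕ} (hn : 1 ≤ n) (C : Config k n) :
    (graph C).Connected :=
  (SimpleGraph.connected_iff_exists_forall_reachable _).2
    ⟨⟨0, hn⟩, fun i => (graph_reachable_first C hn i).symm⟩

end OrderedTheta
end

section
/- In an ordered Θ_k-graph G = (V, E) with k ≥ 2, for every vertex u ∈ V with u ≠ v₁, either {u, v₁} ∈ E, or there exists a neighbour v ∈ N(u) lying in the canonical triangle Δuv₁ with ρ(v) < ρ(u). Consequently, the ordered Θ-routing step target of u towards v₁ exists for every u ≠ v₁. -/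
/-!
Ordered Θ_k-graphs: common definitions.

Points live in the plane, modelled as `ℂ`.  For a point `u`, the plane is
partitioned into `k` cones of aperture `θ = 2π/k`; cone `j` has as bisector the
ray from `u` in direction `exp((π/2 - j·θ)·I)` (cone `0` points upwards, cones
are numbered clockwise).  A point `w ≠ u` lies (in the interior of) cone `j` of
`u` iff the angle between `w - u` and the bisector is `< θ/2`.  `projDist`
measures the length of the orthogonal projection of `w - u` onto the bisector
of cone `j`.  Insertion orders: vertex `i : Fin n` is the `(i+1)`-st inserted
vertex, so `ρ(v) < ρ(u)` is `v < u`.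
-/

namespace OrderedTheta

/-!
The vertex `v₁` precedes `u`, so it lies in an open cone of `u`; the earlier point of that cone
with the smallest bisector projection is joined to `u` when `u` is inserted, and it lies in
`Δ u v₁` because `v₁` is one of the competitors. Since the open cones of `u` are disjoint, it is
also the closest neighbour of `u` in `Δ u v₁`, i.e. the routing step target when `u` and `v₁`
are not adjacent.
-/

lemma dir_ne_zero (k j : ℕ) : dir k j ≠ 0 := Complex.exp_ne_zero _

lemma coe_arg_dir (k j : ℕ) :
    ((dir k j).arg : Real.Angle) = ((Real.pi / 2 - j * theta k : ℝ) : Real.Angle) := by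
  have h : dir k j = Complex.exp (((Real.pi / 2 - j * theta k : ℝ) : ℂ) * Complex.I) := by
    rw [dir]
    push_cast
    ring_nf
  rw [h, Complex.arg_exp_mul_I]
  exact Real.Angle.coe_toIocMod _ _

lemma two_pi_eq_mul_theta {k : ℕ} (hk : k ≠ 0) : 2 * Real.pi = k * theta k := by
  rw [theta]
  field_simp

lemma coe_arg_div_dir_sub {q : ℂ} (hq : q ≠ 0) (k c c' : ℕ) :
    ((Complex.arg (q / dir k c) - Complex.arg (q / dir k c') : ℝ) : Real.Angle) =
      (((c : ℝ) - c') * theta k : ℝ) := by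
  rw [Real.Angle.coe_sub, Complex.arg_div_coe_angle hq (dir_ne_zero k c),
    Complex.arg_div_coe_angle hq (dir_ne_zero k c'), coe_arg_dir, coe_arg_dir,
    ← Real.Angle.coe_sub, ← Real.Angle.coe_sub, ← Real.Angle.coe_sub]
  congr 1
  ring

lemma modEq_of_coe_eq_mul_theta {k : ℕ} (hk : k ≠ 0) {x : ℝ} (hx : |x| < theta k) {c c' : ℕ}
    (h : (x : Real.Angle) = (((c : ℝ) - c') * theta k : ℝ)) : c ≡ c' [MOD k] := by
  obtain ⟨m, hm⟩ := Real.Angle.angle_eq_iff_two_pi_dvd_sub.mp h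
  have hθ : 0 < theta k := (abs_nonneg x).trans_lt hx
  have hx_eq : x = (((c - c' + m * k : ℤ) : ℝ)) * theta k := by
    rw [two_pi_eq_mul_theta hk] at hm
    push_cast
    linear_combination hm
  have hzero : (c - c' + m * k : ℤ) = 0 := by
    rw [← Int.abs_lt_one_iff, ← Int.cast_lt (R := ℝ), Int.cast_abs, Int.cast_one]
    rw [hx_eq, abs_mul, abs_of_pos hθ] at hx
    exact (mul_lt_iff_lt_one_left hθ).mp hx
  exact Nat.modEq_iff_dvd.mpr ⟨m, by linear_combination -hzero⟩

lemma inCone_unique {k : ℕ} {u w : ℂ} {c c' : ℕ} (hc : c < k) (hc' : c' < k)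
    (h : inCone k u w c) (h' : inCone k u w c') : c = c' := by
  have hx : |Complex.arg ((w - u) / dir k c) - Complex.arg ((w - u) / dir k c')| < theta k :=
    calc _ ≤ |Complex.arg ((w - u) / dir k c)| + |Complex.arg ((w - u) / dir k c')| :=
          abs_sub _ _
      _ < theta k / 2 + theta k / 2 := add_lt_add h.2 h'.2
      _ = theta k := add_halves _
  have hmod := modEq_of_coe_eq_mul_theta (by omega) hx
    (coe_arg_div_dir_sub (sub_ne_zero.mpr h.1) k c c')
  rwa [Nat.ModEq, Nat.mod_eq_of_lt hc, Nat.mod_eq_of_lt hc'] at hmod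

lemma exists_nearest_earlier_in_cone {k n : ℕ} (C : Config k n) {u z : Fin n} (hz : z < u) :
    ∃ c < k, inCone k (C.V u) (C.V z) c ∧ ∃ v < u, inCone k (C.V u) (C.V v) c ∧
      ∀ l < u, inCone k (C.V u) (C.V l) c →
        projDist k (C.V u) (C.V v) c ≤ projDist k (C.V u) (C.V l) c := by
  classical
  obtain ⟨c, hck, hzc⟩ := C.gp_cone u z hz
  let S := Finset.univ.filter fun l => l < u ∧ inCone k (C.V u) (C.V l) c
  obtain ⟨v, hvS, hmin⟩ := S.exists_min_image (fun l => projDist k (C.V u) (C.V l) c)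
    ⟨z, by simp [S, hz, hzc]⟩
  simp only [S, Finset.mem_filter, Finset.mem_univ, true_and] at hvS hmin
  exact ⟨c, hck, hzc, v, hvS.1, hvS.2, fun l hl hlc => hmin l ⟨hl, hlc⟩⟩

/-- In an ordered Θ_k-graph with `k ≥ 2`, every vertex
`u ≠ v₁` either is adjacent to `v₁`, or has a neighbour of smaller insertion
order lying in the canonical triangle `Δ u v₁`; consequently the ordered
Θ-routing step target of `u` towards `v₁` exists. -/
theorem routing_step_target_exists {k n : ℕ} (C : Config k n) (hn : 0 < n)
    (u : Fin n) (hu : u ≠ ⟨0, hn⟩) :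
    ((graph C).Adj u ⟨0, hn⟩ ∨
      ∃ v : Fin n, (graph C).Adj u v ∧ v < u ∧
        inCanonical k (C.V u) (C.V ⟨0, hn⟩) (C.V v)) ∧
    ∃ v : Fin n, IsRoutingStep C hn u v := by
  have hz : (⟨0, hn⟩ : Fin n) < u :=
    Fin.lt_def.mpr (Nat.pos_of_ne_zero fun h => hu (Fin.ext h))
  obtain ⟨c, hck, hzc, v, hvu, hvc, hmin⟩ := exists_nearest_earlier_in_cone C hz
  have hadj : (graph C).Adj u v := Or.inl ⟨hvu, c, hck, hvc, hmin⟩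
  have hcan : inCanonical k (C.V u) (C.V ⟨0, hn⟩) (C.V v) := ⟨c, hck, hzc, hvc, hmin _ hz hzc⟩
  refine ⟨?_, ?_⟩
  · by_cases hvz : v = ⟨0, hn⟩
    · exact Or.inl (hvz ▸ hadj)
    · exact Or.inr ⟨v, hadj, hvu, hcan⟩
  · by_cases hA : (graph C).Adj u ⟨0, hn⟩
    · exact ⟨_, Or.inl ⟨hA, rfl⟩⟩
    · refine ⟨v, Or.inr ⟨hA, hadj, hvu, hcan, fun w _ hwu _ c' hc'k hvc' hwc' => ?_⟩⟩
      obtain rfl := inCone_unique hc'k hck hvc' hvc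
      exact hmin w hwu hwc'

end OrderedTheta
end

section
/- In an ordered Θ_k-graph G = (V, E) with k ≥ 2, for every destination vertex t ∈ V, the exploration space S(v₁) contains t. -/
/-!
Ordered Θ_k-graphs: common definitions.

Points live in the plane, modelled as `ℂ`.  For a point `u`, the plane is
partitioned into `k` cones of aperture `θ = 2π/k`; cone `j` has as bisector the
ray from `u` in direction `exp((π/2 - j·θ)·I)` (cone `0` points upwards, cones
are numbered clockwise).  A point `w ≠ u` lies (in the interior of) cone `j` of
`u` iff the angle between `w - u` and the bisector is `< θ/2`.  `projDist`
measures the length of the orthogonal projection of `w - u` onto the bisector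
of cone `j`.  Insertion orders: vertex `i : Fin n` is the `(i+1)`-st inserted
vertex, so `ρ(v) < ρ(u)` is `v < u`.
-/

namespace OrderedTheta

/-!
Every vertex `u ≠ v₁` is joined, in the cone of `u` containing `v₁`, to the earlier point `w`
of that cone nearest to `u` along the bisector. Then `u` is an exploration candidate neighbour
of `w`, and `w < u`, so `t` is reached from `v₁` by induction on the insertion order.
-/

theorem exists_edgeDir_inCone {k n : ℕ} (C : Config k n) {i j : Fin n} {c : ℕ} (hc : c < k)
    (hji : j < i) (hj : inCone k (C.V i) (C.V j) c) :
    ∃ w, EdgeDir C i w ∧ inCone k (C.V i) (C.V w) c := by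
  classical
  let earlier : Finset (Fin n) := {l | l < i ∧ inCone k (C.V i) (C.V l) c}
  obtain ⟨w, hw, hmin⟩ := earlier.exists_min_image (fun l => projDist k (C.V i) (C.V l) c)
    ⟨j, by simp [earlier, hji, hj]⟩
  simp only [earlier, Finset.mem_filter, Finset.mem_univ, true_and] at hw hmin
  exact ⟨w, ⟨hw.1, c, hc, hw.2, fun l hl hlc => hmin l ⟨hl, hlc⟩⟩, hw.2⟩

theorem exists_explCand_of_pos {k n : ℕ} (C : Config k n) (hn : 0 < n) {t u : Fin n}
    (hu : (⟨0, hn⟩ : Fin n) < u) (hut : u ≤ t) :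
    ∃ w < u, ExplCand C hn t w u := by
  obtain ⟨c, hc, hv₁⟩ := C.gp_cone u ⟨0, hn⟩ hu
  obtain ⟨w, hedge, hw⟩ := exists_edgeDir_inCone C hc hu hv₁
  exact ⟨w, hedge.1, Or.inr hedge, hedge.1, hut, c, hc, hv₁, hw⟩

theorem inExplSpace_of_le {k n : ℕ} (C : Config k n) (hn : 0 < n) {t u : Fin n}
    (hut : u ≤ t) : InExplSpace C hn t u := by
  induction u using WellFoundedLT.induction with
  | ind u ih =>
    rcases (show (⟨0, hn⟩ : Fin n) ≤ u from Nat.zero_le _).eq_or_lt with h0 | hu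
    · rw [← h0]; exact .base
    obtain ⟨w, hwu, hcand⟩ := exists_explCand_of_pos C hn hu hut
    exact .step (ih w hwu (hwu.le.trans hut)) hcand

/-- In an ordered Θ_k-graph with `k ≥ 2`, for every
destination vertex `t`, the exploration space `S(v₁)` contains `t`. -/
theorem dest_mem_exploration_space {k n : ℕ} (C : Config k n) (hn : 0 < n)
    (t : Fin n) :
    InExplSpace C hn t t :=
  inExplSpace_of_le C hn le_rfl

end OrderedTheta
end
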